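/- arXiv:1608.08622 — 7 statements merged into one kernel-verified Lean document; each statement's English description precedes it below -/
import Mathlib

section
/- For all ρ ≥ 0, the function α_W(ρ) = ((1+ρ+ρ²)² + 2ρ³) / ((1+ρ+ρ²)(1+ρ)²) satisfies 0.837 < α_W(ρ) < 1.09. -/
noncomputable def alphaW (ρ : ℝ) : ℝ :=
  ((1 + ρ + ρ^2)^2 + 2*ρ^3) / ((1 + ρ + ρ^2) * (1 + ρ)^2)

theorem alphaW_bounds (ρ : ℝ) (hρ : 0 ≤ ρ) :
    0.837 < alphaW ρ ∧ alphaW ρ < 1.09 := by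
  have hD : 0 < (1 + ρ + ρ^2) * (1 + ρ)^2 := by positivity
  unfold alphaW
  constructor
  · rw [lt_div_iff₀ hD]
    nlinarith [sq_nonneg (10*ρ-4), mul_nonneg hρ (sq_nonneg (10*ρ-4)), mul_nonneg (mul_nonneg hρ hρ) (sq_nonneg (10*ρ-4)), sq_nonneg ρ]
  · rw [div_lt_iff₀ hD]
    nlinarith [sq_nonneg (ρ-4), mul_nonneg hρ (sq_nonneg (ρ-4)), sq_nonneg (ρ^2-4*ρ), sq_nonneg ρ, hρ]
end

section
/- Let μ > 0, 0 < ρ₁ ≤ ρ, ρ₂ = ρ − ρ₁, C_π = 1/(1+ρ+ρ²), π̄ = C_π(1,ρ,ρ²). Then v̄₁₁ := ρ/(μ(1+ρ)ρ₁) − C_π(1+ρ+ρ³)/(μ(1+ρ)²) is nonnegative. -/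
/-- Nonnegativity of `v̄₁₁` in the SHS analysis of the LCFS-W queue. -/
theorem lcfsW_v11_nonneg (mu ρ ρ1 : ℝ) (hmu : 0 < mu) (hρ1 : 0 < ρ1) (hle : ρ1 ≤ ρ) :
    0 ≤ ρ / (mu * (1 + ρ) * ρ1)
        - (1 / (1 + ρ + ρ^2)) * (1 + ρ + ρ^3) / (mu * (1 + ρ)^2) := by
  have hρ : 0 < ρ := lt_of_lt_of_le hρ1 hle
  have h1 : 0 < 1 + ρ := by linarith
  have h2 : 0 < 1 + ρ + ρ^2 := by positivity
  rw [sub_nonneg, div_le_div_iff₀ (by positivity) (by positivity), one_div,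
    inv_mul_eq_div, div_mul_eq_mul_div, div_le_iff₀ h2]
  have h3 : 0 ≤ 1 + ρ + ρ^3 := by positivity
  have h4 : 1 + ρ + ρ^3 ≤ (1 + ρ) * (1 + ρ + ρ^2) := by nlinarith
  nlinarith [mul_le_mul_of_nonneg_left hle (by positivity : (0:ℝ) ≤ mu * (1 + ρ) * (1 + ρ + ρ^3)),
    mul_le_mul_of_nonneg_left h4 (by positivity : (0:ℝ) ≤ mu * (1 + ρ) * ρ)]
end

section
/- For λ₁, λ₂, μ > 0 with λ = λ₁+λ₂, ρ = λ/μ, ρ₁ = λ₁/μ, the unique solution (v₀₀, v₀₁) of the system (μ+λ)v₀₀ = 1 + λ₁v₀₀ + λ₂v₀₀ + μv₀₁ and (μ+λ)v₀₁ = 1 + λ₂v₀₀ + μv₀₁ satisfies v₀₀ = (1/μ)(1+ρ)/ρ₁. -/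
theorem lcfsS_fake_updates_general (lam1 lam2 mu : ℝ) (h1 : 0 < lam1)
    (hmu : 0 < mu)
    (v00 v01 : ℝ)
    (heq0 : (mu + (lam1 + lam2)) * v00 = 1 + lam1 * v00 + lam2 * v00 + mu * v01)
    (heq1 : (mu + (lam1 + lam2)) * v01 = 1 + lam2 * v00 + mu * v01) :
    v00 = (1/mu) * (1 + (lam1 + lam2)/mu) / (lam1/mu) := by
  have hv01 : mu * v01 = mu * v00 - 1 := by linarith
  have hv00 : lam1 * v00 * mu = mu + (lam1 + lam2) := by
    linear_combination mu * heq1 - (lam1 + lam2) * hv01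
  field_simp
  linarith

/-- The fake-updates one-state SHS equations for two-source LCFS-S give the
average age `v₀₀ = (1/μ)(1+ρ)/ρ₁`. -/
theorem lcfsS_fake_updates (lam1 lam2 mu : ℝ) (h1 : 0 < lam1) (h2 : 0 < lam2)
    (hmu : 0 < mu)
    (v00 v01 : ℝ)
    (heq0 : (mu + (lam1 + lam2)) * v00 = 1 + lam1 * v00 + lam2 * v00 + mu * v01)
    (heq1 : (mu + (lam1 + lam2)) * v01 = 1 + lam2 * v00 + mu * v01) :
    v00 = (1/mu) * (1 + (lam1 + lam2)/mu) / (lam1/mu) :=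
  lcfsS_fake_updates_general lam1 lam2 mu h1 hmu v00 v01 heq0 heq1
end

section
/- Single-source FCFS M/M/1 age: the function Δ(ρ) = (1/μ)[ρ²/(1−ρ) + 1 + 1/ρ] on (0,1) has a unique minimizer ρ* ∈ (0,1), which is the unique root in (0,1) of ρ⁴ − 2ρ³ + ρ² − 2ρ + 1 = 0 (equivalently of the first-order condition ρ²(2−ρ)/(1−ρ)² = 1/ρ²), and ρ* ∈ (0.52, 0.54). -/
noncomputable def ageFCFS1 (mu ρ : ℝ) : ℝ := (1/mu) * (ρ^2/(1-ρ) + 1 + 1/ρ)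

/-!
Up to the factor `1/μ`, the age is `f ρ = ρ²/(1-ρ) + 1 + 1/ρ`, whose derivative is
`-P(ρ) / (ρ²(1-ρ)²)` with `P(ρ) = ρ⁴ - 2ρ³ + ρ² - 2ρ + 1`. On `[0,1]` we have
`P'(ρ) = 2(ρ(ρ-1)(2ρ-1) - 1) < 0` (the cubic is at most `1/4` in absolute value), so `P` is
strictly decreasing there; it changes sign between `0.52` and `0.54`, so it has exactly one
root `ρ*` in `(0,1)`. Hence `f` decreases on `(0, ρ*]` and increases on `[ρ*, 1)`, and `ρ*` is
the unique minimizer.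
-/

open Set

noncomputable def normalizedAge (ρ : ℝ) : ℝ := ρ^2/(1-ρ) + 1 + 1/ρ

def agePoly (ρ : ℝ) : ℝ := ρ^4 - 2*ρ^3 + ρ^2 - 2*ρ + 1

lemma ageFCFS1_eq (mu ρ : ℝ) : ageFCFS1 mu ρ = (1/mu) * normalizedAge ρ := rfl

lemma hasDerivAt_agePoly (x : ℝ) : HasDerivAt agePoly (4*x^3 - 6*x^2 + 2*x - 2) x := by
  have h := ((((hasDerivAt_pow 4 x).sub ((hasDerivAt_pow 3 x).const_mul 2)).add
      (hasDerivAt_pow 2 x)).sub ((hasDerivAt_id x).const_mul 2)).add_const 1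
  exact h.congr_deriv (by norm_num; ring)

lemma agePoly_strictAntiOn : StrictAntiOn agePoly (Icc 0 1) := by
  refine strictAntiOn_of_deriv_neg (convex_Icc 0 1)
    (fun x _ => (hasDerivAt_agePoly x).continuousAt.continuousWithinAt) fun x hx => ?_
  rw [interior_Icc] at hx
  rw [(hasDerivAt_agePoly x).deriv]
  nlinarith [hx.1, hx.2, mul_pos hx.1 (sub_pos.2 hx.2), sq_nonneg (2*x - 1)]

lemma exists_agePoly_eq_zero : ∃ c ∈ Ioo (0.52:ℝ) 0.54, agePoly c = 0 :=
  intermediate_value_Ioo' (by norm_num)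
    (fun x _ => (hasDerivAt_agePoly x).continuousAt.continuousWithinAt)
    (by constructor <;> norm_num [agePoly])

lemma hasDerivAt_normalizedAge {x : ℝ} (hx : x ∈ Ioo (0:ℝ) 1) :
    HasDerivAt normalizedAge (-agePoly x / (x^2 * (1-x)^2)) x := by
  have hx0 : x ≠ 0 := hx.1.ne'
  have hx1 : 1 - x ≠ 0 := (sub_pos.2 hx.2).ne'
  have h := (((hasDerivAt_pow 2 x).div ((hasDerivAt_id x).const_sub 1) hx1).add_const 1).add
    ((hasDerivAt_const x 1).div (hasDerivAt_id x) hx0)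
  refine h.congr_deriv ?_
  simp only [agePoly, id]
  field_simp
  ring

lemma continuousOn_normalizedAge : ContinuousOn normalizedAge (Ioo 0 1) :=
  fun _ hx => (hasDerivAt_normalizedAge hx).continuousAt.continuousWithinAt

lemma normalizedAge_strictAntiOn {c : ℝ} (hc : c ∈ Ioo (0:ℝ) 1) (hroot : agePoly c = 0) :
    StrictAntiOn normalizedAge (Ioc 0 c) := by
  have hsub : Ioc 0 c ⊆ Ioo 0 1 := fun x hx => ⟨hx.1, hx.2.trans_lt hc.2⟩
  refine strictAntiOn_of_deriv_neg (convex_Ioc 0 c)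
    (continuousOn_normalizedAge.mono hsub) fun x hx => ?_
  rw [interior_Ioc] at hx
  have hx01 : x ∈ Ioo (0:ℝ) 1 := hsub (Ioo_subset_Ioc_self hx)
  have hP : 0 < agePoly x := hroot ▸
    agePoly_strictAntiOn (Ioo_subset_Icc_self hx01) (Ioo_subset_Icc_self hc) hx.2
  have hden : 0 < x^2 * (1-x)^2 := by have := hx01.1; have := hx01.2; positivity
  rw [(hasDerivAt_normalizedAge hx01).deriv]
  exact div_neg_of_neg_of_pos (neg_neg_of_pos hP) hden

lemma normalizedAge_strictMonoOn {c : ℝ} (hc : c ∈ Ioo (0:ℝ) 1) (hroot : agePoly c = 0) :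
    StrictMonoOn normalizedAge (Ico c 1) := by
  have hsub : Ico c 1 ⊆ Ioo 0 1 := fun x hx => ⟨hc.1.trans_le hx.1, hx.2⟩
  refine strictMonoOn_of_deriv_pos (convex_Ico c 1)
    (continuousOn_normalizedAge.mono hsub) fun x hx => ?_
  rw [interior_Ico] at hx
  have hx01 : x ∈ Ioo (0:ℝ) 1 := hsub (Ioo_subset_Ico_self hx)
  have hP : agePoly x < 0 := hroot ▸
    agePoly_strictAntiOn (Ioo_subset_Icc_self hc) (Ioo_subset_Icc_self hx01) hx.1
  have hden : 0 < x^2 * (1-x)^2 := by have := hx01.1; have := hx01.2; positivity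
  rw [(hasDerivAt_normalizedAge hx01).deriv]
  exact div_pos (neg_pos.2 hP) hden

lemma isMinOn_normalizedAge {c : ℝ} (hc : c ∈ Ioo (0:ℝ) 1) (hroot : agePoly c = 0) :
    IsMinOn normalizedAge (Ioo 0 1) c := by
  refine isMinOn_iff.2 fun ρ hρ => ?_
  rcases le_total ρ c with h | h
  · exact (normalizedAge_strictAntiOn hc hroot).antitoneOn ⟨hρ.1, h⟩ ⟨hc.1, le_rfl⟩ h
  · exact (normalizedAge_strictMonoOn hc hroot).monotoneOn ⟨le_rfl, hc.2⟩ ⟨h, hρ.2⟩ h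

/-- The single-source FCFS M/M/1 age has a unique minimizer ρ* in (0,1); it is the
unique root in (0,1) of ρ⁴ - 2ρ³ + ρ² - 2ρ + 1 = 0 and lies in (0.52, 0.54). -/
theorem fcfs_single_source_optimum (mu : ℝ) (hmu : 0 < mu) :
    ∃! ρs : ℝ, ρs ∈ Set.Ioo (0:ℝ) 1 ∧
      (∀ ρ ∈ Set.Ioo (0:ℝ) 1, ageFCFS1 mu ρs ≤ ageFCFS1 mu ρ) ∧
      ρs^4 - 2*ρs^3 + ρs^2 - 2*ρs + 1 = 0 ∧
      (∀ ρ ∈ Set.Ioo (0:ℝ) 1, ρ^4 - 2*ρ^3 + ρ^2 - 2*ρ + 1 = 0 → ρ = ρs) ∧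
      ρs ∈ Set.Ioo (0.52:ℝ) 0.54 := by
  obtain ⟨c, hc, hroot⟩ := exists_agePoly_eq_zero
  have hc01 : c ∈ Ioo (0:ℝ) 1 := ⟨by linarith [hc.1], by linarith [hc.2]⟩
  have huniq : ∀ ρ ∈ Ioo (0:ℝ) 1, agePoly ρ = 0 → ρ = c := fun ρ hρ hρroot =>
    agePoly_strictAntiOn.injOn (Ioo_subset_Icc_self hρ) (Ioo_subset_Icc_self hc01)
      (hρroot.trans hroot.symm)
  have hmin : ∀ ρ ∈ Ioo (0:ℝ) 1, ageFCFS1 mu c ≤ ageFCFS1 mu ρ := fun ρ hρ =>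
    mul_le_mul_of_nonneg_left (isMinOn_iff.1 (isMinOn_normalizedAge hc01 hroot) ρ hρ)
      (one_div_pos.2 hmu).le
  exact ⟨c, ⟨hc01, hmin, hroot, huniq, hc⟩, fun y hy => huniq y hy.1 hy.2.2.1⟩
end

section
/- As N → ∞, with ρ*_N = √N/(√N+1), the ratios Δ_W^{(N)}(ρ*_N)/Δ_F^{(N)}(ρ*_N) → 3/2 and Δ_S^{(N)}(ρ*_N)/Δ_F^{(N)}(ρ*_N) → 2, where Δ_F^{(N)}(ρ) = (N/μ)[(1+ρ)ρ²/(N³(1−ρ)³) + 1/(N(1−ρ)) + 1/ρ], Δ_S^{(N)}(ρ) = (N/μ)[1 + 1/ρ], and Δ_W^{(N)}(ρ) = (N/μ)[1 + 1/(ρ(1+ρ))]. -/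
open Filter

noncomputable def ρstar (N : ℕ) : ℝ := Real.sqrt N / (Real.sqrt N + 1)

noncomputable def ageF (mu : ℝ) (N : ℕ) (ρ : ℝ) : ℝ :=
  (N/mu) * ((1+ρ)*ρ^2/(N^3*(1-ρ)^3) + 1/(N*(1-ρ)) + 1/ρ)

noncomputable def ageS (mu : ℝ) (N : ℕ) (ρ : ℝ) : ℝ := (N/mu) * (1 + 1/ρ)

noncomputable def ageW (mu : ℝ) (N : ℕ) (ρ : ℝ) : ℝ := (N/mu) * (1 + 1/(ρ*(1+ρ)))

/-! With `s = √N` one has `ρ* = s/(s+1) → 1` while `N(1-ρ*) = s²/(s+1) → ∞`. Dividing out the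
common factor `N/μ`, the FCFS bracket `(1+ρ)ρ²/(N(1-ρ))³ + 1/(N(1-ρ)) + 1/ρ` therefore tends
to `1`, and the two ratios tend to the limits of `1 + 1/(ρ(1+ρ))` and `1 + 1/ρ` at `ρ = 1`. -/

open Topology

lemma tendsto_sqrt_natCast_atTop : Tendsto (fun N : ℕ => √(N : ℝ)) atTop atTop :=
  Real.tendsto_sqrt_atTop.comp tendsto_natCast_atTop_atTop

lemma ρstar_eq_one_sub (N : ℕ) : ρstar N = 1 - (√(N : ℝ) + 1)⁻¹ := by
  rw [ρstar]
  field_simp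
  ring

lemma tendsto_ρstar : Tendsto ρstar atTop (𝓝 1) := by
  have h := ((tendsto_atTop_add_const_right _ 1
    tendsto_sqrt_natCast_atTop).inv_tendsto_atTop).const_sub (1 : ℝ)
  rw [sub_zero] at h
  exact h.congr fun N => (ρstar_eq_one_sub N).symm

lemma natCast_mul_one_sub_ρstar (N : ℕ) :
    (N : ℝ) * (1 - ρstar N) = √(N : ℝ) ^ 2 / (√(N : ℝ) + 1) := by
  rw [Real.sq_sqrt N.cast_nonneg, ρstar_eq_one_sub]
  ring

lemma tendsto_natCast_mul_one_sub_ρstar :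
    Tendsto (fun N : ℕ => (N : ℝ) * (1 - ρstar N)) atTop atTop := by
  refine tendsto_atTop_mono (fun N => ?_)
    (tendsto_atTop_add_const_right _ (-1) tendsto_sqrt_natCast_atTop)
  rw [natCast_mul_one_sub_ρstar, le_div_iff₀ (by positivity)]
  nlinarith [Real.sqrt_nonneg (N : ℝ)]

lemma tendsto_fcfs_bracket {α : Type*} {l : Filter α} {ρ x : α → ℝ}
    (hρ : Tendsto ρ l (𝓝 1)) (hx : Tendsto x l atTop) :
    Tendsto (fun a => (1 + ρ a) * ρ a ^ 2 / x a ^ 3 + 1 / x a + 1 / ρ a) l (𝓝 1) := by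
  have hcube : Tendsto (fun a => (1 + ρ a) * ρ a ^ 2 / x a ^ 3) l (𝓝 0) :=
    ((tendsto_const_nhds.add hρ).mul (hρ.pow 2)).div_atTop
      ((tendsto_pow_atTop three_ne_zero).comp hx)
  have hlin : Tendsto (fun a => 1 / x a) l (𝓝 0) :=
    hx.inv_tendsto_atTop.congr fun a => (one_div (x a)).symm
  convert (hcube.add hlin).add ((tendsto_const_nhds (x := (1 : ℝ))).div hρ one_ne_zero)
    using 2 <;> norm_num

lemma tendsto_mul_div_ageF {mu : ℝ} (hmu : mu ≠ 0) {c : ℝ → ℝ} {L : ℝ}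
    (hc : Tendsto (fun N => c (ρstar N)) atTop (𝓝 L)) :
    Tendsto (fun N : ℕ => (N / mu) * c (ρstar N) / ageF mu N (ρstar N)) atTop (𝓝 L) := by
  have hF := tendsto_fcfs_bracket tendsto_ρstar tendsto_natCast_mul_one_sub_ρstar
  refine (div_one L ▸ hc.div hF one_ne_zero).congr' ?_
  filter_upwards [eventually_ne_atTop 0] with N hN
  have hNmu : (N : ℝ) / mu ≠ 0 := div_ne_zero (Nat.cast_ne_zero.mpr hN) hmu
  rw [Pi.div_apply, ageF, mul_div_mul_left _ _ hNmu, mul_pow]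

theorem largeN_age_ratios (mu : ℝ) (hmu : 0 < mu) :
    Tendsto (fun N : ℕ => ageW mu N (ρstar N) / ageF mu N (ρstar N)) atTop (nhds (3/2)) ∧
    Tendsto (fun N : ℕ => ageS mu N (ρstar N) / ageF mu N (ρstar N)) atTop (nhds 2) := by
  have hρ := tendsto_ρstar
  have hW : Tendsto (fun N => 1 + 1 / (ρstar N * (1 + ρstar N))) atTop (𝓝 (3 / 2)) := by
    convert ((tendsto_const_nhds (x := (1 : ℝ))).div (hρ.mul (hρ.const_add 1))
      (by norm_num)).const_add 1 using 2 <;> norm_num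
  have hS : Tendsto (fun N => 1 + 1 / ρstar N) atTop (𝓝 2) := by
    convert ((tendsto_const_nhds (x := (1 : ℝ))).div hρ one_ne_zero).const_add 1
      using 2 <;> norm_num
  exact ⟨tendsto_mul_div_ageF (c := fun ρ => 1 + 1 / (ρ * (1 + ρ))) hmu.ne' hW,
    tendsto_mul_div_ageF (c := fun ρ => 1 + 1 / ρ) hmu.ne' hS⟩
end

section
/- For all ρ > 0 and ρ₁ = ρ (single source), the LCFS-S age (1/μ)(1+ρ)/ρ is strictly less than the LCFS-W age (1/μ)[α_W(ρ) + (1+ρ²/(1+ρ))/ρ], where α_W(ρ) = ((1+ρ+ρ²)²+2ρ³)/((1+ρ+ρ²)(1+ρ)²). -/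
/-- Single-source LCFS-S age is strictly smaller than LCFS-W age. -/
theorem lcfsS_lt_lcfsW_single_source (mu ρ : ℝ) (hmu : 0 < mu) (hρ : 0 < ρ) :
    (1/mu) * (1 + ρ) / ρ < (1/mu) * (alphaW ρ + (1 + ρ^2/(1 + ρ)) / ρ) := by
  have h1 : (0:ℝ) < 1 + ρ := by linarith
  have h2 : (0:ℝ) < 1 + ρ + ρ^2 := by nlinarith
  rw [mul_div_assoc]
  apply mul_lt_mul_of_pos_left _ (by positivity : (0:ℝ) < 1/mu)
  unfold alphaW
  rw [div_lt_iff₀ hρ]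
  have key : 1/(1+ρ) < ((1 + ρ + ρ^2)^2 + 2*ρ^3) / ((1 + ρ + ρ^2) * (1 + ρ)^2) := by
    rw [div_lt_div_iff₀ h1 (by positivity)]
    nlinarith [pow_pos hρ 2, pow_pos hρ 3]
  have e : (1 + ρ^2/(1 + ρ)) / ρ * ρ = 1 + ρ - ρ/(1+ρ) := by
    field_simp
    ring
  have h3 := mul_lt_mul_of_pos_right key hρ
  have h4 : 1/(1+ρ)*ρ = ρ/(1+ρ) := by ring
  rw [add_mul, e]
  linarith [h3, h4.symm ▸ h3]
end

section
/- Symmetric LCFS comparison criterion: for N sources each with load ρ/N at a rate-μ LCFS queue with total load ρ, the LCFS-W age is Δ_W^{sym} = (1/μ)[α_W(ρ) + (1+ρ²/(1+ρ))·(N/ρ)] and the LCFS-S age is Δ_S^{sym} = (1/μ)(1+ρ)·(N/ρ), and Δ_W^{sym} < Δ_S^{sym} if and only if N > (1+ρ)·α_W(ρ). -/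
/-- Symmetric LCFS comparison: with N sources each of load ρ/N,
LCFS-W beats LCFS-S iff N > (1+ρ)·α_W(ρ). -/
theorem symmetric_lcfs_comparison (mu ρ : ℝ) (N : ℕ) (hmu : 0 < mu) (hρ : 0 < ρ)
    (hN : 1 ≤ N) :
    (1/mu) * (alphaW ρ + (1 + ρ^2/(1 + ρ)) * (N/ρ)) < (1/mu) * ((1 + ρ) * (N/ρ))
      ↔ (N : ℝ) > (1 + ρ) * alphaW ρ := by
  have h1 : (0:ℝ) < 1 + ρ := by linarith
  have h2 : (0:ℝ) < 1 + ρ + ρ^2 := by positivity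
  rw [mul_lt_mul_iff_right₀ (by positivity), gt_iff_lt, alphaW]
  have hN1 : (1:ℝ) ≤ N := by exact_mod_cast hN
  field_simp
  constructor <;> intro h <;> nlinarith [sq_nonneg ρ, mul_pos h1 h2, mul_pos hρ h1, mul_lt_mul_of_pos_left h (mul_pos hρ hρ)]
end
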